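/- Let s and t be irrational real numbers. Then s and t have common tails if and only if there exist integers α, β, γ, δ such that t = (αs + β)/(γs + δ) and |αδ - βγ| = 1. -/

import Mathlib

/-- The sequence of complete quotients of the continued fraction expansion of `x`:
`cfTerm x 0 = x` and `cfTerm x (n+1) = 1 / (cfTerm x n - ⌊cfTerm x n⌋)`. -/
noncomputable def cfTerm (x : ℝ) : ℕ → ℝ
  | 0 => x
  | n + 1 => (cfTerm x n - ⌊cfTerm x n⌋)⁻¹

/-- The `n`-th partial quotient (digit) of the simple continued fraction expansion
`[x₀; x₁, x₂, …]` of `x`. -/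
noncomputable def cfDigit (x : ℝ) (n : ℕ) : ℤ := ⌊cfTerm x n⌋

/-- Two real numbers have *common tails* if their continued fraction expansions
eventually agree: there exist `m n` with `s_{m+k} = t_{n+k}` for all `k ≥ 0`. -/
def CommonTails (s t : ℝ) : Prop :=
  ∃ m n : ℕ, ∀ k : ℕ, cfDigit s (m + k) = cfDigit t (n + k)

lemma cfTerm_zero (x : ℝ) : cfTerm x 0 = x := rfl
lemma cfTerm_succ (x : ℝ) (n : ℕ) : cfTerm x (n+1) = (cfTerm x n - ⌊cfTerm x n⌋)⁻¹ := rfl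

lemma cfTerm_irrational {x : ℝ} (hx : Irrational x) : ∀ n, Irrational (cfTerm x n)
  | 0 => hx
  | n + 1 => (Irrational.inv (Irrational.sub_intCast (cfTerm_irrational hx n) _))

lemma cfTerm_succ_gt_one {x : ℝ} (hx : Irrational x) (n : ℕ) : 1 < cfTerm x (n+1) := by
  have h := cfTerm_irrational hx n
  have h0 : 0 < cfTerm x n - ⌊cfTerm x n⌋ := by
    have := Int.floor_le (cfTerm x n)
    have hne : cfTerm x n ≠ (⌊cfTerm x n⌋ : ℝ) := h.ne_int _
    cases' lt_or_eq_of_le this with h' h'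
    · linarith
    · exact absurd h'.symm hne
  have h1 : cfTerm x n - ⌊cfTerm x n⌋ < 1 := by
    have := Int.lt_floor_add_one (cfTerm x n)
    linarith
  rw [cfTerm_succ]
  exact (one_lt_inv₀ h0).mpr h1

lemma cfTerm_shift (x : ℝ) (m : ℕ) : ∀ k, cfTerm x (m + k) = cfTerm (cfTerm x m) k
  | 0 => rfl
  | k + 1 => by rw [← Nat.add_assoc, cfTerm_succ, cfTerm_succ, cfTerm_shift x m k]

lemma cfDigit_shift (x : ℝ) (m k : ℕ) : cfDigit x (m + k) = cfDigit (cfTerm x m) k := by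
  unfold cfDigit; rw [cfTerm_shift]

lemma CommonTails.refl (x : ℝ) : CommonTails x x := ⟨0, 0, fun _ => rfl⟩
lemma CommonTails.symm {x y : ℝ} (h : CommonTails x y) : CommonTails y x := by
  obtain ⟨m, n, h⟩ := h; exact ⟨n, m, fun k => (h k).symm⟩
lemma CommonTails.trans {x y z : ℝ} (h1 : CommonTails x y) (h2 : CommonTails y z) :
    CommonTails x z := by
  obtain ⟨m, n, h1⟩ := h1
  obtain ⟨n', m', h2⟩ := h2
  rcases le_total n n' with h | h
  · refine ⟨m + (n' - n), m', fun k => ?_⟩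
    have e1 : m + (n' - n) + k = m + ((n' - n) + k) := by omega
    have e2 : n + ((n' - n) + k) = n' + k := by omega
    rw [e1, h1, e2, h2]
  · refine ⟨m, m' + (n - n'), fun k => ?_⟩
    have e2 : m' + (n - n') + k = m' + ((n - n') + k) := by omega
    have e1 : n' + ((n - n') + k) = n + k := by omega
    rw [e2, ← h2, e1, ← h1]

lemma CommonTails.of_term_eq {x y : ℝ} {j k : ℕ} (h : cfTerm x j = cfTerm y k) :
    CommonTails x y :=
  ⟨j, k, fun i => by rw [cfDigit_shift, cfDigit_shift, h]⟩

lemma CommonTails.term (x : ℝ) (m : ℕ) : CommonTails x (cfTerm x m) :=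
  CommonTails.of_term_eq (x := x) (y := cfTerm x m) (j := m) (k := 0) rfl

lemma cfTerm_one_add_int (x : ℝ) (n : ℤ) : cfTerm (x + n) 1 = cfTerm x 1 := by
  rw [cfTerm_succ, cfTerm_succ, cfTerm_zero, cfTerm_zero, Int.floor_add_intCast]
  push_cast; ring_nf

lemma CommonTails.add_int (x : ℝ) (n : ℤ) : CommonTails x (x + n) :=
  CommonTails.of_term_eq (j := 1) (k := 1) (cfTerm_one_add_int x n).symm

lemma cfTerm_eq_floor_add_inv {x : ℝ} (hx : Irrational x) (n : ℕ) :
    cfTerm x n = ⌊cfTerm x n⌋ + (cfTerm x (n+1))⁻¹ := by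
  have h1 : 1 < cfTerm x (n+1) := cfTerm_succ_gt_one hx n
  have h2 : cfTerm x (n+1) = (cfTerm x n - ⌊cfTerm x n⌋)⁻¹ := rfl
  have h3 : cfTerm x n - ⌊cfTerm x n⌋ ≠ 0 := by
    intro h; rw [h2, h] at h1; simp at h1; linarith
  rw [h2, inv_inv]; ring

lemma digit_ge_one {x : ℝ} (hx : Irrational x) (n : ℕ) : 1 ≤ ⌊cfTerm x (n+1)⌋ := by
  have := cfTerm_succ_gt_one hx n
  exact Int.le_floor.2 (by exact_mod_cast this.le)

lemma dist_le_of_digits_eq (k : ℕ) : ∀ u v : ℝ, Irrational u → Irrational v →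
    (∀ j, cfDigit u j = cfDigit v j) → |u - v| ≤ (1/4 : ℝ) ^ k := by
  induction k with
  | zero =>
    intro u v hu hv h
    have h0 : ⌊u⌋ = ⌊v⌋ := h 0
    have hu1 : (⌊u⌋ : ℝ) ≤ u := Int.floor_le u
    have hu2 : u < ⌊u⌋ + 1 := Int.lt_floor_add_one u
    have hv1 : (⌊v⌋ : ℝ) ≤ v := Int.floor_le v
    have hv2 : v < ⌊v⌋ + 1 := Int.lt_floor_add_one v
    rw [abs_le]
    constructor <;> [skip; skip] <;>
    · rw [show ((⌊u⌋:ℝ)) = ((⌊v⌋:ℝ)) from by exact_mod_cast h0] at hu1 hu2 <;>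
      simp only [pow_zero] <;> linarith
  | succ k ih =>
    intro u v hu hv h
    set u1 := cfTerm u 1 with hu1def
    set u2 := cfTerm u 2 with hu2def
    set v1 := cfTerm v 1 with hv1def
    set v2 := cfTerm v 2 with hv2def
    have hu1g : 1 < u1 := cfTerm_succ_gt_one hu 0
    have hu2g : 1 < u2 := cfTerm_succ_gt_one hu 1
    have hv1g : 1 < v1 := cfTerm_succ_gt_one hv 0
    have hv2g : 1 < v2 := cfTerm_succ_gt_one hv 1
    have eu0 : u = ⌊u⌋ + u1⁻¹ := cfTerm_eq_floor_add_inv hu 0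
    have ev0 : v = ⌊v⌋ + v1⁻¹ := cfTerm_eq_floor_add_inv hv 0
    have eu1 : u1 = ⌊u1⌋ + u2⁻¹ := cfTerm_eq_floor_add_inv hu 1
    have ev1 : v1 = ⌊v1⌋ + v2⁻¹ := cfTerm_eq_floor_add_inv hv 1
    have hf0 : ⌊u⌋ = ⌊v⌋ := h 0
    have hf1 : ⌊u1⌋ = ⌊v1⌋ := h 1
    have ha1 : (1:ℤ) ≤ ⌊u1⌋ := digit_ge_one hu 0
    -- key identity
    have key : u - v = (u2 - v2) / (u1 * v1 * u2 * v2) := by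
      have h1 : u1 ≠ 0 := by linarith
      have h2 : u2 ≠ 0 := by linarith
      have h3 : v1 ≠ 0 := by linarith
      have h4 : v2 ≠ 0 := by linarith
      have hb : ((⌊u⌋:ℝ)) = ((⌊v⌋:ℝ)) := by exact_mod_cast hf0
      have hb1 : ((⌊u1⌋:ℝ)) = ((⌊v1⌋:ℝ)) := by exact_mod_cast hf1
      rw [eu0, ev0, hb]
      rw [eu1, ev1, hb1]
      field_simp
      ring
    have hden4 : (4:ℝ) ≤ u1 * v1 * u2 * v2 := by
      have huu : (1:ℝ) + u2⁻¹ ≤ u1 := by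
        rw [eu1]
        have : (1:ℝ) ≤ (⌊u1⌋:ℝ) := by exact_mod_cast ha1
        linarith
      have hvv : (1:ℝ) + v2⁻¹ ≤ v1 := by
        rw [ev1]
        have ha1' : (1:ℤ) ≤ ⌊v1⌋ := digit_ge_one hv 0
        have : (1:ℝ) ≤ (⌊v1⌋:ℝ) := by exact_mod_cast ha1'
        linarith
      have hu2pos : (0:ℝ) < u2 := by linarith
      have hv2pos : (0:ℝ) < v2 := by linarith
      have h1 : 2 ≤ u1 * u2 := by
        have : (1 + u2⁻¹) * u2 ≤ u1 * u2 := by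
          apply mul_le_mul_of_nonneg_right huu hu2pos.le
        rw [add_mul, one_mul, inv_mul_cancel₀ hu2pos.ne'] at this
        linarith
      have h2 : 2 ≤ v1 * v2 := by
        have : (1 + v2⁻¹) * v2 ≤ v1 * v2 := by
          apply mul_le_mul_of_nonneg_right hvv hv2pos.le
        rw [add_mul, one_mul, inv_mul_cancel₀ hv2pos.ne'] at this
        linarith
      nlinarith
    have hIH : |u2 - v2| ≤ (1/4:ℝ)^k := by
      apply ih u2 v2 (cfTerm_irrational hu 2) (cfTerm_irrational hv 2)
      intro j
      have e1 : cfDigit u2 j = cfDigit u (2 + j) := (cfDigit_shift u 2 j).symm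
      have e2 : cfDigit v2 j = cfDigit v (2 + j) := (cfDigit_shift v 2 j).symm
      rw [e1, e2, h (2+j)]
    have hdenpos : (0:ℝ) < u1 * v1 * u2 * v2 := by linarith
    rw [key, abs_div, abs_of_pos hdenpos]
    have step : |u2 - v2| / (u1 * v1 * u2 * v2) ≤ |u2 - v2| / 4 := by
      apply div_le_div_of_nonneg_left (abs_nonneg _) (by norm_num) hden4
    calc |u2 - v2| / (u1 * v1 * u2 * v2) ≤ |u2 - v2| / 4 := step
      _ ≤ (1/4:ℝ)^k / 4 := by linarith
      _ = (1/4:ℝ)^(k+1) := by ring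

lemma eq_of_digits_eq {u v : ℝ} (hu : Irrational u) (hv : Irrational v)
    (h : ∀ j, cfDigit u j = cfDigit v j) : u = v := by
  have hle : ∀ k : ℕ, |u - v| ≤ (1/4:ℝ)^k := fun k => dist_le_of_digits_eq k u v hu hv h
  have htend : Filter.Tendsto (fun k : ℕ => (1/4:ℝ)^k) Filter.atTop (nhds 0) := by
    apply tendsto_pow_atTop_nhds_zero_of_lt_one <;> norm_num
  have : |u - v| ≤ 0 := ge_of_tendsto' htend hle
  have := abs_nonneg (u - v)
  have : |u - v| = 0 := le_antisymm ‹|u - v| ≤ 0› this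
  rw [abs_eq_zero, sub_eq_zero] at this
  exact this

/-- The Möbius relation with unimodular integer matrices. -/
def MRel (x y : ℝ) : Prop :=
  ∃ a b c d : ℤ, y = ((a:ℝ) * x + b) / ((c:ℝ) * x + d) ∧ |a * d - b * c| = 1

lemma irr_ne_rat {x : ℝ} (hx : Irrational x) (q : ℚ) : x ≠ (q:ℝ) := fun h => hx ⟨q, h.symm⟩

lemma denom_ne_zero {x : ℝ} (hx : Irrational x) {c d : ℤ} (h : ¬(c = 0 ∧ d = 0)) :
    (c:ℝ) * x + d ≠ 0 := by
  intro heq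
  by_cases hc : c = 0
  · have hd : d ≠ 0 := fun hd => h ⟨hc, hd⟩
    rw [hc] at heq; simp at heq
    exact hd (by exact_mod_cast heq)
  · have hcr : (c:ℝ) ≠ 0 := Int.cast_ne_zero.2 hc
    have : x = ((-d / c : ℚ) : ℝ) := by
      push_cast
      field_simp
      linarith
    exact irr_ne_rat hx _ this

lemma det_ne_zero_aux {a b c d : ℤ} (hdet : |a * d - b * c| = 1) : ¬(c = 0 ∧ d = 0) := by
  rintro ⟨hc, hd⟩; rw [hc, hd] at hdet; simp at hdet

lemma MRel.irrational {x y : ℝ} (hx : Irrational x) {a b c d : ℤ}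
    (hy : y = ((a:ℝ) * x + b) / ((c:ℝ) * x + d)) (hdet : |a * d - b * c| = 1) :
    Irrational y := by
  have hden : (c:ℝ) * x + d ≠ 0 := denom_ne_zero hx (det_ne_zero_aux hdet)
  rintro ⟨q, hq⟩
  have hq' : ((q:ℝ)) * ((c:ℝ) * x + d) = (a:ℝ) * x + b := by
    rw [hq, hy]; rw [div_mul_cancel₀ _ hden]
  have hdet' : a * d - b * c ≠ 0 := by intro h; rw [h] at hdet; simp at hdet
  by_cases hac : (q:ℝ) * c - a = 0
  · have hbd : (q:ℝ) * d - b = 0 := by linear_combination hq' - x * hac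
    have h1 : (a:ℝ) * d - b * c = 0 := by linear_combination (c:ℝ) * hbd - (d:ℝ) * hac
    have : ((a * d - b * c : ℤ) : ℝ) = 0 := by push_cast; linarith
    exact hdet' (by exact_mod_cast this)
  · have hx' : x = (((b - q * d) / (q * c - a) : ℚ) : ℝ) := by
      have hac' : ((q:ℝ) * c - a) ≠ 0 := hac
      push_cast
      rw [eq_div_iff hac']
      linear_combination hq'
    exact (irr_ne_rat hx _) hx'

lemma MRel.refl (x : ℝ) : MRel x x :=
  ⟨1, 0, 0, 1, by push_cast; simp, by norm_num⟩

lemma MRel.symm {x y : ℝ} (hx : Irrational x) (h : MRel x y) : MRel y x := by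
  obtain ⟨a, b, c, d, hy, hdet⟩ := h
  have hden : (c:ℝ) * x + d ≠ 0 := denom_ne_zero hx (det_ne_zero_aux hdet)
  have hy' : y * ((c:ℝ) * x + d) = (a:ℝ) * x + b := by rw [hy]; rw [div_mul_cancel₀ _ hden]
  have hdet' : a * d - b * c ≠ 0 := by intro h; rw [h] at hdet; simp at hdet
  have hnum : (-(c:ℝ)) * y + a ≠ 0 := by
    intro h0
    have hb : y * d - b = 0 := by linear_combination hy' + x * h0
    have h1 : (a:ℝ) * d - b * c = 0 := by linear_combination (d:ℝ) * h0 + (c:ℝ) * hb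
    have h2 : ((a * d - b * c : ℤ) : ℝ) = 0 := by push_cast; linarith
    exact hdet' (by exact_mod_cast h2)
  refine ⟨d, -b, -c, a, ?_, ?_⟩
  · push_cast
    rw [eq_div_iff hnum]
    linear_combination -hy'
  · have : d * a - -b * -c = a * d - b * c := by ring
    rw [this]; exact hdet

lemma MRel.trans {x y z : ℝ} (hx : Irrational x) (h1 : MRel x y) (h2 : MRel y z) :
    MRel x z := by
  obtain ⟨a, b, c, d, hy, hdet⟩ := h1
  obtain ⟨a', b', c', d', hz, hdet'⟩ := h2
  have hden : (c:ℝ) * x + d ≠ 0 := denom_ne_zero hx (det_ne_zero_aux hdet)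
  have hy' : y * ((c:ℝ) * x + d) = (a:ℝ) * x + b := by rw [hy]; rw [div_mul_cancel₀ _ hden]
  have hy2 : Irrational y := MRel.irrational hx hy hdet
  have hden2 : (c':ℝ) * y + d' ≠ 0 := denom_ne_zero hy2 (det_ne_zero_aux hdet')
  refine ⟨a' * a + b' * c, a' * b + b' * d, c' * a + d' * c, c' * b + d' * d, ?_, ?_⟩
  · have hdenx : ((c' * a + d' * c : ℤ):ℝ) * x + ((c' * b + d' * d : ℤ):ℝ) =
        ((c':ℝ) * y + d') * ((c:ℝ) * x + d) := by push_cast; linear_combination (-(c':ℝ)) * hy'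
    have hnumx : ((a' * a + b' * c : ℤ):ℝ) * x + ((a' * b + b' * d : ℤ):ℝ) =
        ((a':ℝ) * y + b') * ((c:ℝ) * x + d) := by push_cast; linear_combination (-(a':ℝ)) * hy'
    rw [hdenx, hnumx, hz]
    rw [div_eq_div_iff hden2 (mul_ne_zero hden2 hden)]
    ring
  · have he : (a' * a + b' * c) * (c' * b + d' * d) - (a' * b + b' * d) * (c' * a + d' * c)
        = (a' * d' - b' * c') * (a * d - b * c) := by ring
    rw [he, abs_mul, hdet, hdet', mul_one]

lemma MRel.term (x : ℝ) (hx : Irrational x) (m : ℕ) : MRel x (cfTerm x m) := by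
  induction m with
  | zero => exact MRel.refl x
  | succ m ih =>
    apply MRel.trans hx ih
    refine ⟨0, 1, 1, -⌊cfTerm x m⌋, ?_, by norm_num⟩
    rw [cfTerm_succ]
    push_cast
    rw [inv_eq_one_div]
    ring_nf

lemma forward {s t : ℝ} (hs : Irrational s) (ht : Irrational t) (h : CommonTails s t) :
    MRel s t := by
  obtain ⟨m, n, h⟩ := h
  have hueq : cfTerm s m = cfTerm t n := by
    apply eq_of_digits_eq (cfTerm_irrational hs m) (cfTerm_irrational ht n)
    intro j
    rw [← cfDigit_shift, ← cfDigit_shift]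
    exact h j
  have h1 : MRel s (cfTerm s m) := MRel.term s hs m
  have h2 : MRel t (cfTerm t n) := MRel.term t ht n
  rw [← hueq] at h2
  exact MRel.trans hs h1 (MRel.symm ht h2)

lemma fract_pos {x : ℝ} (hx : Irrational x) : 0 < x - ⌊x⌋ := by
  have h1 : (⌊x⌋ : ℝ) ≤ x := Int.floor_le x
  have h2 : x ≠ (⌊x⌋ : ℝ) := hx.ne_int _
  cases' lt_or_eq_of_le h1 with h h
  · linarith
  · exact absurd h.symm h2

lemma fract_lt_one (x : ℝ) : x - ⌊x⌋ < 1 := by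
  have := Int.lt_floor_add_one x; linarith

lemma gt_floor_of_irr {x : ℝ} (hx : Irrational x) {n : ℤ} (h : n ≤ ⌊x⌋) : (n:ℝ) < x := by
  have h1 : (n:ℝ) ≤ ⌊x⌋ := by exact_mod_cast h
  have := fract_pos hx
  linarith

lemma CT_inv_gt_one {x : ℝ} (hx : Irrational x) (h1 : 1 < x) : CommonTails x x⁻¹ := by
  apply CommonTails.of_term_eq (j := 0) (k := 1)
  have hx0 : (0:ℝ) < x := by linarith
  have hfl : ⌊x⁻¹⌋ = 0 := by
    apply Int.floor_eq_zero_iff.2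
    rw [Set.mem_Ico]
    constructor
    · positivity
    · exact inv_lt_one_of_one_lt₀ h1
  rw [cfTerm_zero, cfTerm_succ, cfTerm_zero, hfl]
  push_cast
  rw [sub_zero, inv_inv]

lemma CT_neg {x : ℝ} (hx : Irrational x) : CommonTails x (-x) := by
  have hf0 : 0 < x - ⌊x⌋ := fract_pos hx
  have hf1 : x - ⌊x⌋ < 1 := fract_lt_one x
  have hflneg : ⌊-x⌋ = -⌊x⌋ - 1 := by
    rw [Int.floor_eq_iff]
    constructor <;> push_cast <;> linarith
  have hterm1 : cfTerm (-x) 1 = (1 - (x - ⌊x⌋))⁻¹ := by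
    rw [cfTerm_succ, cfTerm_zero, hflneg]
    congr 1
    push_cast
    ring
  set x1 := cfTerm x 1 with hx1def
  have hx1eq : x1 = (x - ⌊x⌋)⁻¹ := rfl
  have hx1g : 1 < x1 := cfTerm_succ_gt_one hx 0
  have hx1irr : Irrational x1 := cfTerm_irrational hx 1
  have hfl1 : 1 ≤ ⌊x1⌋ := digit_ge_one hx 0
  have hfne : x - ⌊x⌋ ≠ 0 := ne_of_gt hf0
  have hfne1 : (1:ℝ) - (x - ⌊x⌋) ≠ 0 := by linarith
  have hx1z : x1 ≠ 0 := by intro h; rw [h] at hx1g; linarith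
  have hfx : x - ⌊x⌋ = x1⁻¹ := by rw [hx1eq, inv_inv]
  by_cases hcase : ⌊x1⌋ = 1
  · -- Case B : 1 < x1 < 2
    have hx2eq : cfTerm x 2 = (x1 - 1)⁻¹ := by
      show (cfTerm x 1 - ⌊cfTerm x 1⌋)⁻¹ = _
      rw [← hx1def, hcase]
      norm_num
    set x2 := cfTerm x 2 with hx2def
    have hx1ne : x1 - 1 ≠ 0 := by intro h; apply hx1g.ne'; linarith
    have hweq : cfTerm (-x) 1 = x2 + 1 := by
      rw [hterm1, hx2eq, hfx]
      field_simp
      ring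
    have c1 : CommonTails x x2 := CommonTails.term x 2
    have c2 : CommonTails x2 (x2 + ((1:ℤ):ℝ)) := CommonTails.add_int x2 1
    have c3 : CommonTails (-x) (cfTerm (-x) 1) := CommonTails.term (-x) 1
    rw [hweq] at c3
    push_cast at c2
    exact c1.trans (c2.trans c3.symm)
  · -- Case A : 2 < x1
    have hfl2 : 2 ≤ ⌊x1⌋ := by omega
    have hx1g2 : (2:ℝ) < x1 := gt_floor_of_irr hx1irr hfl2
    have hx1ne : x1 - 1 ≠ 0 := by intro h; apply hx1g.ne'; linarith
    have hw : cfTerm (-x) 1 = 1 + (x1 - 1)⁻¹ := by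
      rw [hterm1, hfx]
      field_simp
      ring
    have hinvlt : (x1 - 1)⁻¹ < 1 := by
      rw [inv_lt_one_iff₀]; right; linarith
    have hinvpos : 0 < (x1 - 1)⁻¹ := by
      apply inv_pos.2; linarith
    have hflw : ⌊cfTerm (-x) 1⌋ = 1 := by
      rw [Int.floor_eq_iff, hw]
      constructor <;> push_cast <;> linarith
    have hterm2 : cfTerm (-x) 2 = x1 - 1 := by
      show (cfTerm (-x) 1 - ⌊cfTerm (-x) 1⌋)⁻¹ = _
      rw [hflw, hw]
      push_cast
      rw [show (1:ℝ) + (x1 - 1)⁻¹ - 1 = (x1 - 1)⁻¹ by ring, inv_inv]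
    have c1 : CommonTails x x1 := CommonTails.term x 1
    have c2 : CommonTails x1 (x1 + ((-1:ℤ):ℝ)) := CommonTails.add_int x1 (-1)
    have c3 : CommonTails (-x) (cfTerm (-x) 2) := CommonTails.term (-x) 2
    rw [hterm2] at c3
    have e1 : x1 + ((-1:ℤ):ℝ) = x1 - 1 := by push_cast; ring
    rw [e1] at c2
    exact c1.trans (c2.trans c3.symm)

lemma CT_inv_pos {x : ℝ} (hx : Irrational x) (h0 : 0 < x) : CommonTails x x⁻¹ := by
  have hne1 : x ≠ 1 := fun h => (hx.ne_int 1) (by rw [h]; norm_num)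
  rcases lt_or_gt_of_ne hne1 with h | h
  · have h1 : 1 < x⁻¹ := (one_lt_inv₀ h0).2 h
    have := CT_inv_gt_one hx.inv h1
    rw [inv_inv] at this
    exact this.symm
  · exact CT_inv_gt_one hx h

lemma CT_inv {x : ℝ} (hx : Irrational x) : CommonTails x x⁻¹ := by
  have hne0 : x ≠ 0 := hx.ne_zero
  rcases lt_or_gt_of_ne hne0 with hneg | hpos
  · have c1 : CommonTails x (-x) := CT_neg hx
    have c2 : CommonTails (-x) (-x)⁻¹ := CT_inv_pos hx.neg (by linarith)
    have c3 : CommonTails x⁻¹ (-x⁻¹) := CT_neg hx.inv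
    rw [inv_neg] at c2
    exact c1.trans (c2.trans c3.symm)
  · exact CT_inv_pos hx hpos

lemma CT_affine {x : ℝ} (hx : Irrational x) (ε m : ℤ) (hε : ε = 1 ∨ ε = -1) :
    CommonTails x ((ε:ℝ) * x + m) := by
  rcases hε with h | h <;> subst h
  · have := CommonTails.add_int x m
    convert this using 2
    push_cast; ring
  · have c1 : CommonTails x (-x) := CT_neg hx
    have c2 : CommonTails (-x) (-x + ((m:ℤ):ℝ)) := CommonTails.add_int (-x) m
    have e : ((-1:ℤ):ℝ) * x + m = -x + ((m:ℤ):ℝ) := by push_cast; ring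
    rw [e]
    exact c1.trans c2

lemma rev_zero {x : ℝ} (hx : Irrational x) {a b d : ℤ} (hdet : |a * d - b * 0| = 1) :
    CommonTails x (((a:ℝ) * x + b) / (((0:ℤ):ℝ) * x + d)) := by
  rw [mul_zero, sub_zero] at hdet
  have h1 : (a * d).natAbs = 1 := by
    rw [Int.abs_eq_natAbs] at hdet
    exact_mod_cast hdet
  rw [Int.natAbs_mul] at h1
  have ha1 : a.natAbs = 1 := Nat.dvd_one.mp ⟨d.natAbs, h1.symm⟩
  have hd1 : d.natAbs = 1 := Nat.dvd_one.mp ⟨a.natAbs, by rw [mul_comm]; exact h1.symm⟩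
  have ha' : a = 1 ∨ a = -1 := by omega
  have hd' : d = 1 ∨ d = -1 := by omega
  have hz : (((0:ℤ):ℝ) * x + d) = (d:ℝ) := by push_cast; ring
  rw [hz]
  rcases hd' with h | h <;> subst h
  · have e : ((a:ℝ) * x + b) / ((1:ℤ):ℝ) = (a:ℝ) * x + b := by push_cast; ring
    rw [e]
    exact CT_affine hx a b ha'
  · have e : ((a:ℝ) * x + b) / (((-1):ℤ):ℝ) = ((-a:ℤ):ℝ) * x + ((-b:ℤ):ℝ) := by
      push_cast; ring
    rw [e]
    exact CT_affine hx (-a) (-b) (by omega)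

lemma rev_main : ∀ N : ℕ, ∀ c a b d : ℤ, c.natAbs ≤ N → |a * d - b * c| = 1 →
    ∀ x : ℝ, Irrational x → CommonTails x (((a:ℝ) * x + b) / ((c:ℝ) * x + d)) := by
  intro N
  induction N with
  | zero =>
    intro c a b d hc hdet x hx
    have hc0 : c = 0 := by omega
    subst hc0
    exact rev_zero hx hdet
  | succ N ih =>
    intro c a b d hc hdet x hx
    by_cases hc0 : c = 0
    · subst hc0; exact rev_zero hx hdet
    have key : ∀ cc aa bb dd : ℤ, 0 < cc → cc.natAbs ≤ N + 1 → |aa * dd - bb * cc| = 1 →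
        CommonTails x (((aa:ℝ) * x + bb) / ((cc:ℝ) * x + dd)) := by
      intro cc aa bb dd hcpos hcle hdet'
      obtain ⟨q, r, hra, hr0, hrlt⟩ : ∃ q r : ℤ, aa = cc * q + r ∧ 0 ≤ r ∧ r < cc :=
        ⟨aa / cc, aa % cc, by rw [Int.mul_ediv_add_emod aa cc], Int.emod_nonneg aa (ne_of_gt hcpos),
          Int.emod_lt_of_pos aa hcpos⟩
      set e := bb - q * dd with hedef
      have hdet2 : |cc * e - dd * r| = 1 := by
        have h2 : cc * e - dd * r = -(aa * dd - bb * cc) := by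
          rw [hedef]
          linear_combination (dd : ℤ) * hra
        rw [h2, abs_neg]
        exact hdet'
      have hCTu : CommonTails x (((cc:ℝ) * x + dd) / ((r:ℝ) * x + e)) :=
        ih r cc dd e (by omega) hdet2 x hx
      set u := ((cc:ℝ) * x + dd) / ((r:ℝ) * x + e) with hudef
      have hu_irr : Irrational u := MRel.irrational hx hudef hdet2
      have hdenc : (cc:ℝ) * x + dd ≠ 0 :=
        denom_ne_zero hx (by rintro ⟨h1, -⟩; omega)
      have hdenre : (r:ℝ) * x + e ≠ 0 := denom_ne_zero hx (det_ne_zero_aux hdet2)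
      have heqt : ((aa:ℝ) * x + bb) / ((cc:ℝ) * x + dd) = u⁻¹ + q := by
        rw [hudef, inv_div]
        rw [div_add' _ _ _ hdenc, div_eq_div_iff hdenc hdenc]
        have hraR : (aa:ℝ) = cc * q + r := by exact_mod_cast hra
        have heR : (e:ℝ) = bb - q * dd := by exact_mod_cast hedef
        rw [hraR, heR]
        ring
      rw [heqt]
      have c2 : CommonTails u u⁻¹ := CT_inv hu_irr
      have c3 : CommonTails u⁻¹ (u⁻¹ + ((q:ℤ):ℝ)) := CommonTails.add_int u⁻¹ q
      exact hCTu.trans (c2.trans c3)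
    rcases lt_or_gt_of_ne hc0 with hneg | hpos
    · have h1 : -((a:ℝ) * x + b) = ((-a:ℤ):ℝ) * x + ((-b:ℤ):ℝ) := by push_cast; ring
      have h2 : -((c:ℝ) * x + d) = ((-c:ℤ):ℝ) * x + ((-d:ℤ):ℝ) := by push_cast; ring
      have heq : ((a:ℝ) * x + b) / ((c:ℝ) * x + d)
          = (((-a:ℤ):ℝ) * x + ((-b:ℤ):ℝ)) / (((-c:ℤ):ℝ) * x + ((-d:ℤ):ℝ)) := by
        rw [← h1, ← h2, neg_div_neg_eq]
      rw [heq]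
      exact key (-c) (-a) (-b) (-d) (by omega) (by omega)
        (by rw [show (-a) * (-d) - (-b) * (-c) = a * d - b * c by ring]; exact hdet)
    · exact key c a b d hpos hc hdet


/-- Irrationals `s` and `t` have common tails iff `t = (αs + β)/(γs + δ)` for some integers
`α β γ δ` with `|αδ - βγ| = 1`. -/
theorem roots_common_tails_stmt_4 (s t : ℝ) (hs : Irrational s) (ht : Irrational t) :
    CommonTails s t ↔
      ∃ α β γ δ : ℤ, t = ((α : ℝ) * s + (β : ℝ)) / ((γ : ℝ) * s + (δ : ℝ)) ∧
        |α * δ - β * γ| = 1 := by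
  constructor
  · intro h
    obtain ⟨a, b, c, d, h1, h2⟩ := forward hs ht h
    exact ⟨a, b, c, d, h1, h2⟩
  · rintro ⟨a, b, c, d, h1, h2⟩
    rw [h1]
    exact rev_main c.natAbs c a b d le_rfl h2 s hs
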